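/- Theorem 1 (functional regret bound for NML, abstract form): Let Y be a finite set and let a : Y → (0,1]; define p_NML(y) = a(y)/S with S = ∑_{y'} a(y'), and let Γ = log S ≥ 0. Let p* be a pmf on Y with p*(y) ≤ a(y) for all y and KL(p*‖p_NML) ≤ Γ. Then for any g : Y → ℝ with 0 ≤ g(y) ≤ g_max, |E_{p_NML}[g] − E_{p*}[g]| ≤ 2 g_max √(Γ/2). -/
import Mathlib


theorem stmt_10 {Y : Type*} [Fintype Y] [Nonempty Y] (a : Y → ℝ)
    (ha : ∀ y, 0 < a y ∧ a y ≤ 1)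
    (S : ℝ) (hS : S = ∑ y, a y)
    (pNML : Y → ℝ) (hpNML : ∀ y, pNML y = a y / S)
    (Γ : ℝ) (hΓ : Γ = Real.log S) (hΓ0 : 0 ≤ Γ)
    (pstar : Y → ℝ) (hps : ∀ y, 0 ≤ pstar y) (hps1 : ∑ y, pstar y = 1)
    (hple : ∀ y, pstar y ≤ a y)
    (hKL : ∑ y, pstar y * Real.log (pstar y / pNML y) ≤ Γ)
    (g : Y → ℝ) (gmax : ℝ) (hg : ∀ y, 0 ≤ g y ∧ g y ≤ gmax) :
    |∑ y, pNML y * g y - ∑ y, pstar y * g y| ≤ 2 * gmax * Real.sqrt (Γ / 2) := by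
  have hS0 : 0 < S := by
    rw [hS]; exact Finset.sum_pos (fun y _ => (ha y).1) Finset.univ_nonempty
  have hq0 : ∀ y, 0 < pNML y := fun y => by
    rw [hpNML]; exact div_pos (ha y).1 hS0
  have hq1 : ∑ y, pNML y = 1 := by
    simp only [hpNML]
    rw [← Finset.sum_div, ← hS, div_self hS0.ne']
  -- pointwise Hellinger bound
  have hpt : ∀ y, (Real.sqrt (pstar y) - Real.sqrt (pNML y)) ^ 2 ≤
      pstar y * Real.log (pstar y / pNML y) - pstar y + pNML y := by
    intro y
    rcases eq_or_lt_of_le (hps y) with h0 | h0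
    · rw [← h0]
      simp [Real.sq_sqrt (hq0 y).le]
    · set x := pstar y with hx
      set q := pNML y with hqy
      have hx0 : 0 < x := h0
      have hq0' : 0 < q := hq0 y
      have hsx : 0 < Real.sqrt x := Real.sqrt_pos.2 hx0
      have hsq : 0 < Real.sqrt q := Real.sqrt_pos.2 hq0'
      have hlog : Real.log (Real.sqrt q / Real.sqrt x) ≤ Real.sqrt q / Real.sqrt x - 1 :=
        Real.log_le_sub_one_of_pos (div_pos hsq hsx)
      have hld : Real.log (Real.sqrt q / Real.sqrt x) =
          Real.log q / 2 - Real.log x / 2 := by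
        rw [Real.log_div hsq.ne' hsx.ne', Real.log_sqrt hq0'.le, Real.log_sqrt hx0.le]
      have hld2 : Real.log (x / q) = Real.log x - Real.log q := by
        rw [Real.log_div hx0.ne' hq0'.ne']
      have hx2 : Real.sqrt x ^ 2 = x := Real.sq_sqrt hx0.le
      have hq2 : Real.sqrt q ^ 2 = q := Real.sq_sqrt hq0'.le
      rw [hld] at hlog
      -- log(x/q) ≥ 2 - 2√q/√x
      have key : 2 - 2 * (Real.sqrt q / Real.sqrt x) ≤ Real.log (x / q) := by
        rw [hld2]; linarith
      have hdiv : x * (Real.sqrt q / Real.sqrt x) = Real.sqrt x * Real.sqrt q := by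
        field_simp
        nlinarith [hx2]
      nlinarith [mul_le_mul_of_nonneg_left key hx0.le, hdiv, hx2, hq2]
  -- sum of pointwise bounds
  have hHell : ∑ y, (Real.sqrt (pstar y) - Real.sqrt (pNML y)) ^ 2 ≤ Γ := by
    calc ∑ y, (Real.sqrt (pstar y) - Real.sqrt (pNML y)) ^ 2
        ≤ ∑ y, (pstar y * Real.log (pstar y / pNML y) - pstar y + pNML y) :=
          Finset.sum_le_sum fun y _ => hpt y
      _ = ∑ y, pstar y * Real.log (pstar y / pNML y) := by
          rw [Finset.sum_add_distrib, Finset.sum_sub_distrib, hps1, hq1]; ring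
      _ ≤ Γ := hKL
  -- Cauchy–Schwarz
  have hCS : (∑ y, |pstar y - pNML y|) ^ 2 ≤
      (∑ y, (Real.sqrt (pstar y) - Real.sqrt (pNML y)) ^ 2) *
      ∑ y, (Real.sqrt (pstar y) + Real.sqrt (pNML y)) ^ 2 := by
    have := Finset.sum_mul_sq_le_sq_mul_sq Finset.univ
      (fun y => |Real.sqrt (pstar y) - Real.sqrt (pNML y)|)
      (fun y => Real.sqrt (pstar y) + Real.sqrt (pNML y))
    have heq : ∀ y : Y, |Real.sqrt (pstar y) - Real.sqrt (pNML y)| *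
        (Real.sqrt (pstar y) + Real.sqrt (pNML y)) = |pstar y - pNML y| := by
      intro y
      have h1 : 0 ≤ Real.sqrt (pstar y) + Real.sqrt (pNML y) :=
        add_nonneg (Real.sqrt_nonneg _) (Real.sqrt_nonneg _)
      rw [← abs_of_nonneg h1, ← abs_mul]
      congr 1
      have := Real.sq_sqrt (hps y)
      have := Real.sq_sqrt (hq0 y).le
      ring_nf
      nlinarith
    simp only [heq, sq_abs] at this
    exact this
  have hsum2 : ∑ y, (Real.sqrt (pstar y) + Real.sqrt (pNML y)) ^ 2 ≤ 4 := by
    calc ∑ y, (Real.sqrt (pstar y) + Real.sqrt (pNML y)) ^ 2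
        ≤ ∑ y, (2 * pstar y + 2 * pNML y) := by
          refine Finset.sum_le_sum fun y _ => ?_
          have h1 := Real.sq_sqrt (hps y)
          have h2 := Real.sq_sqrt (hq0 y).le
          nlinarith [sq_nonneg (Real.sqrt (pstar y) - Real.sqrt (pNML y))]
      _ = 4 := by
          rw [Finset.sum_add_distrib, ← Finset.mul_sum, ← Finset.mul_sum, hps1, hq1]; ring
  have hTVnn : 0 ≤ ∑ y, |pstar y - pNML y| :=
    Finset.sum_nonneg fun y _ => abs_nonneg _
  have hHellnn : 0 ≤ ∑ y, (Real.sqrt (pstar y) - Real.sqrt (pNML y)) ^ 2 :=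
    Finset.sum_nonneg fun y _ => sq_nonneg _
  have hTVsq : (∑ y, |pstar y - pNML y|) ^ 2 ≤ 4 * Γ := by
    calc (∑ y, |pstar y - pNML y|) ^ 2
        ≤ (∑ y, (Real.sqrt (pstar y) - Real.sqrt (pNML y)) ^ 2) * 4 := by
          refine hCS.trans ?_
          exact mul_le_mul_of_nonneg_left hsum2 hHellnn
      _ ≤ 4 * Γ := by nlinarith
  have hTV : ∑ y, |pstar y - pNML y| ≤ 2 * Real.sqrt Γ := by
    have h2 : (2 * Real.sqrt Γ) ^ 2 = 4 * Γ := by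
      rw [mul_pow, Real.sq_sqrt hΓ0]; ring
    nlinarith [Real.sqrt_nonneg Γ, hTVsq]
  -- gmax nonneg
  obtain ⟨y0⟩ := ‹Nonempty Y›
  have hgm : 0 ≤ gmax := le_trans (hg y0).1 (hg y0).2
  -- centering trick
  have hcent : ∑ y, pNML y * g y - ∑ y, pstar y * g y =
      ∑ y, (pNML y - pstar y) * (g y - gmax / 2) := by
    simp only [sub_mul, mul_sub]
    rw [Finset.sum_sub_distrib]
    rw [Finset.sum_sub_distrib, Finset.sum_sub_distrib]
    have : ∑ y, pNML y * (gmax / 2) = ∑ y, pstar y * (gmax / 2) := by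
      rw [← Finset.sum_mul, ← Finset.sum_mul, hps1, hq1]
    rw [this]; ring
  have hbound : |∑ y, pNML y * g y - ∑ y, pstar y * g y| ≤
      gmax / 2 * ∑ y, |pstar y - pNML y| := by
    rw [hcent]
    calc |∑ y, (pNML y - pstar y) * (g y - gmax / 2)|
        ≤ ∑ y, |(pNML y - pstar y) * (g y - gmax / 2)| := Finset.abs_sum_le_sum_abs _ _
      _ ≤ ∑ y, |pstar y - pNML y| * (gmax / 2) := by
          refine Finset.sum_le_sum fun y _ => ?_
          rw [abs_mul, abs_sub_comm]
          refine mul_le_mul_of_nonneg_left ?_ (abs_nonneg _)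
          rw [abs_le]
          exact ⟨by linarith [(hg y).1], by linarith [(hg y).2]⟩
      _ = gmax / 2 * ∑ y, |pstar y - pNML y| := by rw [← Finset.sum_mul]; ring
  have hfinal : gmax / 2 * ∑ y, |pstar y - pNML y| ≤ gmax * Real.sqrt Γ := by
    calc gmax / 2 * ∑ y, |pstar y - pNML y|
        ≤ gmax / 2 * (2 * Real.sqrt Γ) := by
          exact mul_le_mul_of_nonneg_left hTV (by linarith)
      _ = gmax * Real.sqrt Γ := by ring
  have hsqrt : Real.sqrt Γ ≤ 2 * Real.sqrt (Γ / 2) := by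
    have : (2 : ℝ) * Real.sqrt (Γ / 2) = Real.sqrt (4 * (Γ / 2)) := by
      rw [Real.sqrt_mul (by norm_num : (0:ℝ) ≤ 4)]
      rw [show Real.sqrt 4 = 2 by
        rw [show (4:ℝ) = 2 ^ 2 by norm_num, Real.sqrt_sq (by norm_num : (0:ℝ) ≤ 2)]]
    rw [this]
    exact Real.sqrt_le_sqrt (by linarith)
  calc |∑ y, pNML y * g y - ∑ y, pstar y * g y|
      ≤ gmax * Real.sqrt Γ := hbound.trans hfinal
    _ ≤ 2 * gmax * Real.sqrt (Γ / 2) := by nlinarith [Real.sqrt_nonneg Γ]
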